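/- Fix v ∈ (−π,0) ∪ (0,π). Then the function u ↦ Re(i·Li₂(−e^{u+iv})) = −Im Li₂(−e^{u+iv}) is differentiable on ℝ with derivative Arg(1 + e^{u+iv}), and for every u ∈ ℝ one has Re(i·Li₂(−e^{u+iv})) = −D(−e^{u+iv}) + u·Arg(1 + e^{u+iv}). -/

import Mathlib

open Real

/-- The dilogarithm `Li₂(z) = -∫₀¹ Log(1 - z t) / t dt`. -/
noncomputable def Li2 (z : ℂ) : ℂ :=
  -∫ t in (0:ℝ)..(1:ℝ), Complex.log (1 - z * (t : ℂ)) / (t : ℂ)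

/-- The Bloch–Wigner function `D(z) = Im Li₂(z) + Arg(1-z) log|z|`. -/
noncomputable def BlochWigner (z : ℂ) : ℝ :=
  (Li2 z).im + (1 - z).arg * Real.log ‖z‖

/-! Off the real axis, `|1 - z t| ≥ |Im z| / ‖z‖` for all real `t` (the distance from `0` to the
line `1 - ℝ z`). This bound dominates the `z`-derivative `-(1 - z t)⁻¹` of the integrand, so
differentiating under the integral sign gives `Li₂'(z) = -∫₀¹ (1 - z t)⁻¹ dt = -Log(1 - z) / z`;
it also shows, via the mean value theorem, that the integrand `Log(1 - z t) / t` is bounded.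
Along `z = -e^{u+iv}` one has `dz/du = z`, so `d/du Li₂(-e^{u+iv}) = -Log(1 + e^{u+iv})`, and
`Re(i · -Log w) = Arg w`. The second identity is the definition of `D`, as `log ‖-e^{u+iv}‖ = u`. -/

open Complex Filter MeasureTheory

theorem one_sub_mul_ofReal_mem_slitPlane {z : ℂ} (hz : z.im ≠ 0) (t : ℝ) :
    1 - z * t ∈ slitPlane := by
  rcases eq_or_ne t 0 with rfl | ht
  · simp
  · exact mem_slitPlane_iff.mpr (Or.inr (by simpa using And.intro hz ht))

theorem abs_im_le_norm_mul_norm_one_sub_mul_ofReal (z : ℂ) (t : ℝ) :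
    |z.im| ≤ ‖z‖ * ‖1 - z * t‖ := by
  have him : (starRingEnd ℂ z * (1 - z * t)).im = -z.im := by
    simp only [mul_sub, mul_one, sub_im, conj_im, mul_im, mul_re, conj_re, ofReal_re, ofReal_im]
    ring
  calc |z.im| = |(starRingEnd ℂ z * (1 - z * t)).im| := by rw [him, abs_neg]
    _ ≤ ‖starRingEnd ℂ z * (1 - z * t)‖ := abs_im_le_norm _
    _ = ‖z‖ * ‖1 - z * t‖ := by rw [norm_mul, norm_conj]

theorem norm_inv_one_sub_mul_ofReal_le {z : ℂ} (hz : z.im ≠ 0) (t : ℝ) :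
    ‖(1 - z * t)⁻¹‖ ≤ ‖z‖ / |z.im| := by
  have hne : 1 - z * t ≠ 0 := slitPlane_ne_zero (one_sub_mul_ofReal_mem_slitPlane hz t)
  rw [norm_inv, le_div_iff₀ (abs_pos.mpr hz), inv_mul_le_iff₀ (norm_pos_iff.mpr hne), mul_comm]
  exact abs_im_le_norm_mul_norm_one_sub_mul_ofReal z t

theorem hasDerivAt_log_one_sub_mul_ofReal {z : ℂ} (hz : z.im ≠ 0) (t : ℝ) :
    HasDerivAt (fun s : ℝ => Complex.log (1 - z * s)) (-z / (1 - z * t)) t := by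
  have h : HasDerivAt (fun s : ℝ => 1 - z * s) (-z) t := by
    simpa using ((hasDerivAt_id (t : ℂ)).const_mul z).const_sub 1 |>.comp_ofReal
  exact h.clog_real (one_sub_mul_ofReal_mem_slitPlane hz t)

theorem norm_log_one_sub_mul_ofReal_le {z : ℂ} (hz : z.im ≠ 0) (t : ℝ) :
    ‖Complex.log (1 - z * t)‖ ≤ ‖z‖ ^ 2 / |z.im| * |t| := by
  have hbound (s : ℝ) : ‖-z / (1 - z * s)‖ ≤ ‖z‖ ^ 2 / |z.im| := by
    rw [div_eq_mul_inv, norm_mul, norm_neg, sq, mul_div_assoc]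
    exact mul_le_mul_of_nonneg_left (norm_inv_one_sub_mul_ofReal_le hz s) (norm_nonneg z)
  simpa using convex_univ.norm_image_sub_le_of_norm_hasDerivWithin_le
    (fun s _ => (hasDerivAt_log_one_sub_mul_ofReal hz s).hasDerivWithinAt)
    (fun s _ => hbound s) (Set.mem_univ 0) (Set.mem_univ t)

theorem intervalIntegral_neg_inv_one_sub_mul_ofReal {z : ℂ} (hz : z.im ≠ 0) :
    ∫ t in (0 : ℝ)..1, -(1 - z * t)⁻¹ = Complex.log (1 - z) / z := by
  have hz0 : z ≠ 0 := fun h => hz (by simp [h])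
  have hcont : Continuous fun t : ℝ => -z / (1 - z * t) :=
    continuous_const.div (by fun_prop)
      fun t => slitPlane_ne_zero (one_sub_mul_ofReal_mem_slitPlane hz t)
  have hftc := intervalIntegral.integral_eq_sub_of_hasDerivAt
    (fun t _ => hasDerivAt_log_one_sub_mul_ofReal hz t) (hcont.intervalIntegrable 0 1)
  simp only [ofReal_one, mul_one, ofReal_zero, mul_zero, sub_zero, Complex.log_one] at hftc
  rw [eq_div_iff hz0, ← hftc, ← intervalIntegral.integral_mul_const]
  congr 1 with t
  ring

theorem intervalIntegrable_log_one_sub_mul_ofReal_div {z : ℂ} (hz : z.im ≠ 0) :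
    IntervalIntegrable (fun t : ℝ => Complex.log (1 - z * t) / t) volume 0 1 := by
  refine (intervalIntegrable_const (c := ‖z‖ ^ 2 / |z.im|)).mono_fun'
    (Measurable.aestronglyMeasurable (by fun_prop)) (ae_of_all _ fun t => ?_)
  rcases eq_or_ne t 0 with rfl | ht
  · simp only [ofReal_zero, div_zero, norm_zero]
    positivity
  · dsimp only
    rw [norm_div, norm_real, Real.norm_eq_abs, div_le_iff₀ (abs_pos.mpr ht)]
    exact norm_log_one_sub_mul_ofReal_le hz t

theorem hasDerivAt_log_one_sub_mul_ofReal_div {w : ℂ} {t : ℝ} (ht : t ≠ 0)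
    (hw : 1 - w * t ∈ slitPlane) :
    HasDerivAt (fun w : ℂ => Complex.log (1 - w * t) / t) (-(1 - w * t)⁻¹) w := by
  refine ((((hasDerivAt_id w).mul_const (t : ℂ)).const_sub 1).clog hw).div_const (t : ℂ)
    |>.congr_deriv ?_
  have htc : (t : ℂ) ≠ 0 := ofReal_ne_zero.mpr ht
  field_simp [slitPlane_ne_zero hw]
  simp

theorem hasDerivAt_Li2 {z : ℂ} (hz : z.im ≠ 0) : HasDerivAt Li2 (-Complex.log (1 - z) / z) z := by
  set r := |z.im| / 2 with hr_def
  have hr : 0 < r := by positivity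
  have hball {w : ℂ} (hw : w ∈ Metric.ball z r) : r ≤ |w.im| ∧ ‖w‖ ≤ ‖z‖ + r := by
    rw [Metric.mem_ball, dist_eq_norm] at hw
    have him : |z.im - w.im| ≤ ‖w - z‖ := by
      simpa [abs_sub_comm] using abs_im_le_norm (w - z)
    constructor
    · linarith [abs_sub_abs_le_abs_sub z.im w.im, hr_def]
    · linarith [norm_le_norm_add_norm_sub' w z]
  have hbound : ∀ t : ℝ, ∀ w ∈ Metric.ball z r, ‖-(1 - w * t)⁻¹‖ ≤ (‖z‖ + r) / r := by
    intro t w hw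
    obtain ⟨hw_im, hw_norm⟩ := hball hw
    calc ‖-(1 - w * t)⁻¹‖ ≤ ‖w‖ / |w.im| := by
          rw [norm_neg]; exact norm_inv_one_sub_mul_ofReal_le (abs_pos.mp (hr.trans_le hw_im)) t
      _ ≤ (‖z‖ + r) / r := div_le_div₀ (by positivity) hw_norm hr hw_im
  have hdiff : ∀ t ∈ Set.uIoc (0 : ℝ) 1, ∀ w ∈ Metric.ball z r,
      HasDerivAt (fun w : ℂ => Complex.log (1 - w * t) / t) (-(1 - w * t)⁻¹) w := by
    intro t ht w hw
    rw [Set.uIoc_of_le zero_le_one] at ht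
    exact hasDerivAt_log_one_sub_mul_ofReal_div ht.1.ne'
      (one_sub_mul_ofReal_mem_slitPlane (abs_pos.mp (hr.trans_le (hball hw).1)) t)
  obtain ⟨-, hderiv⟩ := intervalIntegral.hasDerivAt_integral_of_dominated_loc_of_deriv_le
    (x₀ := z) (F := fun (w : ℂ) (t : ℝ) => Complex.log (1 - w * t) / t)
    (F' := fun (w : ℂ) (t : ℝ) => -(1 - w * t)⁻¹) (bound := fun _ => (‖z‖ + r) / r)
    (Metric.ball_mem_nhds z hr)
    (Eventually.of_forall fun w => Measurable.aestronglyMeasurable (by fun_prop))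
    (intervalIntegrable_log_one_sub_mul_ofReal_div hz)
    (Measurable.aestronglyMeasurable (by fun_prop))
    (ae_of_all _ fun t _ => hbound t) intervalIntegrable_const
    (ae_of_all _ hdiff)
  rw [intervalIntegral_neg_inv_one_sub_mul_ofReal hz] at hderiv
  rw [neg_div]
  exact hderiv.neg

theorem hasDerivAt_Li2_neg_exp {c : ℂ} {u : ℝ} (h : (Complex.exp (u + c)).im ≠ 0) :
    HasDerivAt (fun x : ℝ => Li2 (-Complex.exp (x + c)))
      (-Complex.log (1 + Complex.exp (u + c))) u := by
  have hexp : HasDerivAt (fun x : ℝ => -Complex.exp (x + c)) (-Complex.exp (u + c)) u := by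
    simpa using (((hasDerivAt_id (u : ℂ)).add_const c).cexp.neg).comp_ofReal
  have hLi2 := (hasDerivAt_Li2 (z := -Complex.exp (u + c)) (by simpa using h)).comp u hexp
  refine hLi2.congr_deriv ?_
  rw [sub_neg_eq_add, div_mul_cancel₀ _ (neg_ne_zero.mpr (Complex.exp_ne_zero _))]

/-- For fixed `v ∈ (-π,0) ∪ (0,π)`, the function
`u ↦ Re(i Li₂(-e^{u+iv})) = -Im Li₂(-e^{u+iv})` is differentiable on `ℝ`
with derivative `Arg(1 + e^{u+iv})`, and equals
`-D(-e^{u+iv}) + u Arg(1 + e^{u+iv})`. -/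
theorem stmt_3 (v : ℝ) (hv : v ∈ Set.Ioo (-π) 0 ∪ Set.Ioo 0 π) :
    (∀ u : ℝ,
      HasDerivAt (fun u : ℝ => (Complex.I * Li2 (-Complex.exp ((u : ℂ) + (v : ℂ) * Complex.I))).re)
        ((1 + Complex.exp ((u : ℂ) + (v : ℂ) * Complex.I)).arg) u) ∧
    (∀ u : ℝ,
      (Complex.I * Li2 (-Complex.exp ((u : ℂ) + (v : ℂ) * Complex.I))).re
        = -BlochWigner (-Complex.exp ((u : ℂ) + (v : ℂ) * Complex.I))
          + u * (1 + Complex.exp ((u : ℂ) + (v : ℂ) * Complex.I)).arg) := by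
  have hsin : Real.sin v ≠ 0 := fun h => by
    rcases hv with ⟨h₁, h₂⟩ | ⟨h₁, h₂⟩ <;>
      linarith [(Real.sin_eq_zero_iff_of_lt_of_lt (by linarith) (by linarith)).mp h]
  refine ⟨fun u => ?_, fun u => ?_⟩
  · have him : (Complex.exp (u + v * I)).im ≠ 0 := by
      simpa [Complex.exp_im] using And.intro (Real.exp_ne_zero u) hsin
    have hre := Complex.reCLM.hasFDerivAt.comp_hasDerivAt u
      ((hasDerivAt_Li2_neg_exp him).const_mul I)
    refine hre.congr_deriv ?_
    simp [Complex.log_im]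
  · have hnorm : ‖-Complex.exp (u + v * I)‖ = Real.exp u := by simp [Complex.norm_exp]
    rw [BlochWigner, hnorm, Real.log_exp, sub_neg_eq_add, I_mul_re]
    ring
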